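/- arXiv:math/0203138 — 2 statements merged into one kernel-verified Lean document; each statement's English description precedes it below -/
import Mathlib

section
/- Let n ≥ 3 and 2 ≤ k ≤ n. Let Λ = (λ_1,…,λ_n) ∈ ℝ^n and suppose that A_Λ ∈ Γ̄_k^+. Then min_{1 ≤ i ≤ n} λ_i ≥ ((2k−n)/(2n(k−1))) · Σ_{i=1}^n λ_i. -/
/-!
Put `A = A_Λ`. The set `{σ_1 > 0, …, σ_k > 0}` is open, contains `1`, and contains every point of
its closure at which `σ_k > 0`; as `Γ_k^+` is connected, it lies in that set, so `σ_j(A) ≥ 0` for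
`j ≤ k`.

Fix a coordinate `a = A_i < 0` and let `y` be the other `N = n - 1` coordinates. From
`σ_j(A) = σ_j(y) + a σ_{j-1}(y) ≥ 0` we get `σ_j(y) ≥ (-a)^j > 0` for `j ≤ k` and
`-a σ_{k-1}(y) ≤ σ_k(y)`. Together with `k N σ_k(y) ≤ (N - k + 1) σ_1(y) σ_{k-1}(y)` this gives
`k (n - 1) (-a) ≤ (n - k) σ_1(y)`, i.e. `A_i ≥ (k - n) / (n (k - 1)) · σ_1(A)`, which is the claim
once `A = Λ - c · 1` is substituted.

Both the closure property and the inequality for `y` come from differentiating `∏ (X - y_i)`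
`N - k` times: by Rolle the result is still real-rooted, and its normalized coefficients
`σ_j / C(·, j)` agree with those of `y` for `j ≤ k`. Nonnegative coefficients force its roots
`-ρ_i` to be negative, and the inequality becomes AM-HM for the `ρ_i`.
-/

/-- The `k`-th elementary symmetric polynomial of `x : Fin n → ℝ`. -/
noncomputable def sigmaElem (n k : ℕ) (x : Fin n → ℝ) : ℝ :=
  ∑ s ∈ Finset.univ.powersetCard k, ∏ i ∈ s, x i

/-- The Gårding cone `Γ_k^+ ⊆ ℝ^n`: the connected component of
`{σ_k > 0}` containing `(1, …, 1)`. -/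
def GammaPlus (n k : ℕ) : Set (Fin n → ℝ) :=
  connectedComponentIn {x | 0 < sigmaElem n k x} (fun _ => 1)

/-- `A_Λ = Λ − (Σ_i λ_i / (2(n−1))) · (1,…,1)`. -/
noncomputable def ALam (n : ℕ) (Λ : Fin n → ℝ) : Fin n → ℝ :=
  fun i => Λ i - (∑ j, Λ j) / (2 * ((n : ℝ) - 1))

open Polynomial

namespace Multiset

section CommSemiring

variable {R : Type*} [CommSemiring R]

theorem esymm_cons_succ (a : R) (s : Multiset R) (j : ℕ) :
    (a ::ₘ s).esymm (j + 1) = s.esymm (j + 1) + a * s.esymm j := by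
  simp [esymm, powersetCard_cons, map_map, sum_map_mul_left]

theorem esymm_one (s : Multiset R) : s.esymm 1 = s.sum := by
  simp [esymm, powersetCard_one, map_map]

theorem le_card_of_esymm_ne_zero {s : Multiset R} {j : ℕ} (h : s.esymm j ≠ 0) : j ≤ card s := by
  by_contra! hlt
  exact h (by simp [esymm, powersetCard_eq_empty _ hlt])

end CommSemiring

section LinearOrder

variable {R : Type*} [CommRing R] [LinearOrder R] [IsStrictOrderedRing R]

theorem esymm_pos {s : Multiset R} (hs : ∀ a ∈ s, 0 < a) {j : ℕ} (hj : j ≤ card s) :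
    0 < s.esymm j := by
  obtain ⟨t, f, rfl⟩ : ∃ (t : Finset (R × ℕ)) (f : R × ℕ → R), s = t.val.map f :=
    ⟨s.toEnumFinset, Prod.fst, (map_toEnumFinset_fst s).symm⟩
  simp only [mem_map, Finset.mem_val, forall_exists_index, and_imp, forall_apply_eq_imp_iff₂,
    card_map, Finset.card_val] at hs hj
  rw [Finset.esymm_map_val]
  exact Finset.sum_pos
    (fun u hu => Finset.prod_pos fun i hi => hs i ((Finset.mem_powersetCard.1 hu).1 hi))
    (Finset.powersetCard_nonempty.2 hj)

theorem forall_pos_of_esymm_nonneg {s : Multiset R} (hnn : ∀ j ≤ card s, 0 ≤ s.esymm j)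
    (hpos : 0 < s.esymm (card s)) : ∀ a ∈ s, 0 < a := by
  intro a ha
  by_contra! hle
  have hzero : ((s.map fun r => X + C r).prod).eval (-a) = 0 := by
    rw [eval_multiset_prod]
    exact prod_eq_zero (mem_map.2 ⟨X + C a, mem_map.2 ⟨a, ha, rfl⟩, by simp⟩)
  have hsum := congrArg (eval (-a)) (prod_X_add_C_eq_sum_esymm s)
  simp only [hzero, eval_finsetSum, eval_mul, eval_C, eval_pow, eval_X] at hsum
  rw [Finset.sum_range_succ, Nat.sub_self, pow_zero, mul_one] at hsum
  have hrest : 0 ≤ ∑ j ∈ Finset.range (card s), s.esymm j * (-a) ^ (card s - j) :=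
    Finset.sum_nonneg fun j hj =>
      mul_nonneg (hnn j (Finset.mem_range.1 hj).le) (pow_nonneg (by linarith) _)
  linarith

end LinearOrder

end Multiset

theorem Finset.sum_powersetCard_card_sub_one_prod {ι K : Type*} [DecidableEq ι] [Field K]
    {s : Finset ι} (hs : s.Nonempty) {f : ι → K} (hf : ∀ i ∈ s, f i ≠ 0) :
    ∑ u ∈ s.powersetCard (s.card - 1), ∏ i ∈ u, f i = (∏ i ∈ s, f i) * ∑ i ∈ s, (f i)⁻¹ := by
  rw [mul_sum]
  symm
  refine sum_nbij (fun i => s.erase i) (fun i hi => ?_) s.erase_injOn (fun u hu => ?_)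
    (fun i hi => ?_)
  · simp [mem_powersetCard, erase_subset, card_erase_of_mem hi]
  · obtain ⟨hus, hcard⟩ := mem_powersetCard.1 hu
    obtain ⟨a, hau, rfl⟩ := exists_eq_insert_iff.2 ⟨hus, by have := hs.card_pos; omega⟩
    exact ⟨a, mem_insert_self a u, erase_insert hau⟩
  · rw [← mul_prod_erase s f hi]
    field_simp [hf i hi]

/-- AM-HM, since `esymm (card s - 1) = esymm (card s) * ∑ a⁻¹`. -/
theorem Multiset.sq_card_mul_esymm_card_le {K : Type*} [Field K] [LinearOrder K]
    [IsStrictOrderedRing K] {s : Multiset K} (hs : ∀ a ∈ s, 0 < a) :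
    (card s : K) ^ 2 * s.esymm (card s) ≤ s.esymm 1 * s.esymm (card s - 1) := by
  classical
  obtain ⟨t, f, rfl⟩ : ∃ (t : Finset (K × ℕ)) (f : K × ℕ → K), s = t.val.map f :=
    ⟨s.toEnumFinset, Prod.fst, (map_toEnumFinset_fst s).symm⟩
  simp only [mem_map, Finset.mem_val, forall_exists_index, and_imp,
    forall_apply_eq_imp_iff₂] at hs
  rcases t.eq_empty_or_nonempty with rfl | ht
  · simp [esymm, powersetCard_zero_right]
  simp only [card_map, Finset.card_val, Finset.esymm_map_val, Finset.powersetCard_self,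
    Finset.sum_singleton, Finset.powersetCard_one, Finset.sum_map,
    Finset.sum_powersetCard_card_sub_one_prod ht fun i hi => (hs i hi).ne']
  have hcs : (t.card : K) ^ 2 ≤ (∑ i ∈ t, f i) * ∑ i ∈ t, (f i)⁻¹ := by
    simpa using Finset.sum_sq_le_sum_mul_sum_of_sq_le_mul t (r := 1)
      (fun i hi => (hs i hi).le) (fun i hi => (inv_pos.2 (hs i hi)).le)
      (fun i hi => by simp [(hs i hi).ne'])
  have hprod : 0 < ∏ i ∈ t, f i := Finset.prod_pos hs
  calc (t.card : K) ^ 2 * ∏ i ∈ t, f i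
      ≤ ((∑ i ∈ t, f i) * ∑ i ∈ t, (f i)⁻¹) * ∏ i ∈ t, f i :=
        mul_le_mul_of_nonneg_right hcs hprod.le
    _ = _ := by simp only [Function.Embedding.coeFn_mk, Finset.prod_singleton]; ring

theorem Nat.choose_mul_descFactorial_sub {N d j : ℕ} (hj : j ≤ d) (hd : d ≤ N) :
    N.choose j * (N - j).descFactorial (N - d) = d.choose j * N.descFactorial (N - d) := by
  rw [descFactorial_eq_factorial_mul_choose, descFactorial_eq_factorial_mul_choose,
    choose_symm hd, choose_symm_of_eq_add (show N - j = (N - d) + (d - j) by omega)]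
  calc N.choose j * ((N - d).factorial * (N - j).choose (d - j))
      = (N - d).factorial * (N.choose j * (N - j).choose (d - j)) := by ring
    _ = d.choose j * ((N - d).factorial * N.choose d) := by rw [← choose_mul hj]; ring

theorem Polynomial.card_roots_derivative {p : ℝ[X]} (hp : Multiset.card p.roots = p.natDegree) :
    Multiset.card (derivative p).roots = (derivative p).natDegree := by
  have := card_roots_le_derivative p
  have := card_roots' (derivative p)
  have := natDegree_derivative_le p
  omega

theorem Polynomial.card_roots_iterate_derivative {p : ℝ[X]}
    (hp : Multiset.card p.roots = p.natDegree) (m : ℕ) :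
    Multiset.card (derivative^[m] p).roots = (derivative^[m] p).natDegree := by
  induction m with
  | zero => exact hp
  | succ m ih =>
    rw [Function.iterate_succ_apply']
    exact card_roots_derivative ih

namespace Multiset

/-- `ρ` is the root multiset of the `(card y - d)`-th derivative of `∏ (X - y_i)`. -/
theorem exists_card_eq_esymm_mul_choose_eq (y : Multiset ℝ) {d : ℕ} (hd : d ≤ card y) :
    ∃ ρ : Multiset ℝ, card ρ = d ∧
      ∀ j ≤ d, y.esymm j * d.choose j = ρ.esymm j * (card y).choose j := by
  set N := card y
  set p := (y.map fun a => X - C a).prod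
  have hpmonic : p.Monic := monic_multiset_prod_of_monic _ _ fun a _ => monic_X_sub_C a
  have hproots : p.roots = y := roots_multiset_prod_X_sub_C y
  have hpdeg : p.natDegree = N := natDegree_multiset_prod_X_sub_C_eq_card y
  set g := derivative^[N - d] p
  have hgcoeff (i : ℕ) :
      g.coeff i = (i + (N - d)).descFactorial (N - d) * p.coeff (i + (N - d)) := by
    rw [coeff_iterate_derivative, nsmul_eq_mul]
  have hlead : g.coeff d = N.descFactorial (N - d) := by
    rw [hgcoeff, show d + (N - d) = N by omega, ← hpdeg, hpmonic.coeff_natDegree, mul_one]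
  have hfac : (0 : ℝ) < N.descFactorial (N - d) := by
    exact_mod_cast Nat.descFactorial_pos.2 (by omega)
  have hgdeg : g.natDegree = d := by
    refine le_antisymm ?_ (le_natDegree_of_ne_zero (by rw [hlead]; exact hfac.ne'))
    have : g.natDegree ≤ p.natDegree - (N - d) := natDegree_iterate_derivative p (N - d)
    omega
  have hgroots : card g.roots = g.natDegree :=
    card_roots_iterate_derivative (by rw [hproots, hpdeg]) (N - d)
  refine ⟨g.roots, hgroots.trans hgdeg, fun j hj => ?_⟩
  have hvieta_p := coeff_eq_esymm_roots_of_card (by rw [hproots, hpdeg]) (k := N - j) (by omega)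
  have hvieta_g := coeff_eq_esymm_roots_of_card hgroots (k := d - j) (by omega)
  rw [hgcoeff, show d - j + (N - d) = N - j by omega, hvieta_p] at hvieta_g
  rw [hpmonic.leadingCoeff, Polynomial.leadingCoeff, hgdeg, hlead, hproots, hpdeg,
    show N - (N - j) = j by omega, show d - (d - j) = j by omega] at hvieta_g
  have hcoeff : ((N - j).descFactorial (N - d) : ℝ) * y.esymm j
      = N.descFactorial (N - d) * g.roots.esymm j := by
    refine mul_left_cancel₀ (pow_ne_zero j (by norm_num : (-1 : ℝ) ≠ 0)) ?_
    linear_combination hvieta_g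
  have hnat := congrArg (Nat.cast : ℕ → ℝ) (Nat.choose_mul_descFactorial_sub hj hd)
  push_cast at hnat
  refine mul_right_cancel₀ hfac.ne' ?_
  linear_combination (-y.esymm j) * hnat + (N.choose j : ℝ) * hcoeff

theorem exists_pos_esymm_mul_choose_eq {y : Multiset ℝ} {k : ℕ}
    (hnn : ∀ j ≤ k, 0 ≤ y.esymm j) (hpos : 0 < y.esymm k) :
    ∃ ρ : Multiset ℝ, card ρ = k ∧ (∀ a ∈ ρ, 0 < a) ∧
      ∀ j ≤ k, y.esymm j * k.choose j = ρ.esymm j * (card y).choose j := by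
  have hky := le_card_of_esymm_ne_zero hpos.ne'
  obtain ⟨ρ, hcard, hρ⟩ := exists_card_eq_esymm_mul_choose_eq y hky
  have hchoose (j : ℕ) (hj : j ≤ k) : (0 : ℝ) < (card y).choose j := by
    exact_mod_cast Nat.choose_pos (hj.trans hky)
  refine ⟨ρ, hcard, forall_pos_of_esymm_nonneg (fun j hj => ?_) ?_, hρ⟩
  · rw [hcard] at hj
    refine nonneg_of_mul_nonneg_left ?_ (hchoose j hj)
    rw [← hρ j hj]
    exact mul_nonneg (hnn j hj) (Nat.cast_nonneg _)
  · rw [hcard]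
    refine pos_of_mul_pos_left ?_ (hchoose k le_rfl).le
    rw [← hρ k le_rfl, Nat.choose_self, Nat.cast_one, mul_one]
    exact hpos

theorem esymm_pos_of_esymm_nonneg {y : Multiset ℝ} {k : ℕ}
    (hnn : ∀ j ≤ k, 0 ≤ y.esymm j) (hpos : 0 < y.esymm k) {j : ℕ} (hj : j ≤ k) :
    0 < y.esymm j := by
  obtain ⟨ρ, hcard, hρpos, hρ⟩ := exists_pos_esymm_mul_choose_eq hnn hpos
  refine pos_of_mul_pos_left (b := (k.choose j : ℝ)) ?_ (Nat.cast_nonneg _)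
  rw [hρ j hj]
  exact mul_pos (esymm_pos hρpos (hcard ▸ hj))
    (by exact_mod_cast Nat.choose_pos (hj.trans (le_card_of_esymm_ne_zero hpos.ne')))

/-- In terms of the normalized functions `E_j = esymm j / choose N j` this is the
Newton–Maclaurin consequence `E_k ≤ E_1 E_{k-1}`. -/
theorem mul_card_mul_esymm_le {y : Multiset ℝ} {k : ℕ} (hk : 1 ≤ k)
    (hnn : ∀ j ≤ k, 0 ≤ y.esymm j) (hpos : 0 < y.esymm k) :
    (k * card y : ℝ) * y.esymm k ≤ ((card y : ℝ) - k + 1) * y.esymm 1 * y.esymm (k - 1) := by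
  obtain ⟨ρ, hcard, hρpos, hρ⟩ := exists_pos_esymm_mul_choose_eq hnn hpos
  have hky := le_card_of_esymm_ne_zero hpos.ne'
  have hamhm := sq_card_mul_esymm_card_le hρpos
  rw [hcard] at hamhm
  have e1 := hρ 1 hk
  have ek1 := hρ (k - 1) (by omega)
  have ek := hρ k le_rfl
  simp only [Nat.choose_one_right] at e1
  rw [Nat.choose_symm hk, Nat.choose_one_right] at ek1
  rw [Nat.choose_self, Nat.cast_one, mul_one] at ek
  have hpascal := congrArg (Nat.cast : ℕ → ℝ) (Nat.choose_succ_right_eq (card y) (k - 1))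
  rw [Nat.sub_add_cancel hk] at hpascal
  push_cast [Nat.cast_sub (show k - 1 ≤ card y by omega), Nat.cast_sub hk] at hpascal
  have hk0 : (0 : ℝ) < k := by exact_mod_cast hk
  refine le_of_mul_le_mul_left ?_ (pow_pos hk0 2)
  calc (k : ℝ) ^ 2 * ((k * card y) * y.esymm k)
      = (k * card y * (card y).choose k) * (k ^ 2 * ρ.esymm k) := by rw [ek]; ring
    _ ≤ (k * card y * (card y).choose k) * (ρ.esymm 1 * ρ.esymm (k - 1)) :=
      mul_le_mul_of_nonneg_left hamhm (by positivity)
    _ = k ^ 2 * (((card y : ℝ) - k + 1) * y.esymm 1 * y.esymm (k - 1)) := by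
      linear_combination (card y * ρ.esymm 1 * ρ.esymm (k - 1)) * hpascal
        - ((card y : ℝ) - k + 1) * (k * y.esymm (k - 1) * e1 + ρ.esymm 1 * card y * ek1)

theorem neg_mul_le_of_esymm_cons_nonneg {a : ℝ} {y : Multiset ℝ} {k : ℕ} (ha : a < 0)
    (hk : 1 ≤ k) (hnn : ∀ j ≤ k, 0 ≤ (a ::ₘ y).esymm j) :
    -(k * card y : ℝ) * a ≤ ((card y : ℝ) - k + 1) * y.esymm 1 := by
  have hstep (j : ℕ) (hj : j < k) : -a * y.esymm j ≤ y.esymm (j + 1) := by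
    have := hnn (j + 1) hj
    rw [esymm_cons_succ] at this
    linarith
  have hchain (j : ℕ) : j ≤ k → (-a) ^ j ≤ y.esymm j := by
    induction j with
    | zero => intro _; simp [esymm]
    | succ j ih =>
      intro hj
      calc (-a) ^ (j + 1) = -a * (-a) ^ j := by ring
        _ ≤ -a * y.esymm j := mul_le_mul_of_nonneg_left (ih (by omega)) (by linarith)
        _ ≤ y.esymm (j + 1) := hstep j hj
  have hpos (j : ℕ) (hj : j ≤ k) : 0 < y.esymm j :=
    (pow_pos (neg_pos.2 ha) j).trans_le (hchain j hj)
  have htop := hstep (k - 1) (by omega)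
  rw [Nat.sub_add_cancel hk] at htop
  refine le_of_mul_le_mul_right ?_ (hpos (k - 1) (by omega))
  calc -(k * card y : ℝ) * a * y.esymm (k - 1) = (k * card y) * (-a * y.esymm (k - 1)) := by ring
    _ ≤ (k * card y) * y.esymm k := mul_le_mul_of_nonneg_left htop (by positivity)
    _ ≤ _ := mul_card_mul_esymm_le hk (fun j hj => (hpos j hj).le) (hpos k le_rfl)

end Multiset

theorem sigmaElem_eq_esymm (n j : ℕ) (x : Fin n → ℝ) :
    sigmaElem n j x = (Finset.univ.val.map x).esymm j :=
  (Finset.esymm_map_val x Finset.univ j).symm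

theorem continuous_sigmaElem (n j : ℕ) : Continuous (sigmaElem n j) := by
  unfold sigmaElem
  fun_prop

theorem isOpen_setOf_sigmaElem_pos (n k : ℕ) :
    IsOpen {x : Fin n → ℝ | ∀ j ≤ k, 0 < sigmaElem n j x} := by
  have : {x : Fin n → ℝ | ∀ j ≤ k, 0 < sigmaElem n j x}
      = ⋂ j ∈ Set.Iic k, {x | 0 < sigmaElem n j x} := by
    ext
    simp
  rw [this]
  exact (Set.finite_Iic k).isOpen_biInter fun j _ =>
    isOpen_lt continuous_const (continuous_sigmaElem n j)

theorem isClosed_setOf_sigmaElem_nonneg (n k : ℕ) :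
    IsClosed {x : Fin n → ℝ | ∀ j ≤ k, 0 ≤ sigmaElem n j x} := by
  simp only [Set.ofPred_forall]
  exact isClosed_iInter fun j => isClosed_iInter fun _ =>
    isClosed_le continuous_const (continuous_sigmaElem n j)

theorem GammaPlus_subset_setOf_sigmaElem_pos {n k : ℕ} (hkn : k ≤ n) :
    GammaPlus n k ⊆ {x | ∀ j ≤ k, 0 < sigmaElem n j x} := by
  have hone (j : ℕ) (hj : j ≤ n) : 0 < sigmaElem n j (fun _ => 1) := by
    rw [sigmaElem_eq_esymm]
    refine Multiset.esymm_pos (fun a ha => ?_) (by simpa using hj)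
    obtain ⟨_, _, rfl⟩ := Multiset.mem_map.1 ha
    exact one_pos
  refine isPreconnected_connectedComponentIn.subset_of_closure_inter_subset
    (isOpen_setOf_sigmaElem_pos n k)
    ⟨fun _ => 1, mem_connectedComponentIn (hone k hkn), fun j hj => hone j (hj.trans hkn)⟩ ?_
  rintro x ⟨hxcl, hxΓ⟩
  have hσk : 0 < sigmaElem n k x := connectedComponentIn_subset _ (fun _ => 1) hxΓ
  have hnn : ∀ j ≤ k, 0 ≤ sigmaElem n j x :=
    closure_minimal (fun y hy j hj => (hy j hj).le) (isClosed_setOf_sigmaElem_nonneg n k) hxcl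
  simp only [sigmaElem_eq_esymm] at hσk hnn ⊢
  exact fun j hj => Multiset.esymm_pos_of_esymm_nonneg hnn hσk hj

theorem closure_GammaPlus_subset_setOf_sigmaElem_nonneg {n k : ℕ} (hkn : k ≤ n) :
    closure (GammaPlus n k) ⊆ {x | ∀ j ≤ k, 0 ≤ sigmaElem n j x} :=
  closure_minimal (fun _ hx j hj => (GammaPlus_subset_setOf_sigmaElem_pos hkn hx j hj).le)
    (isClosed_setOf_sigmaElem_nonneg n k)

theorem mul_sum_le_apply_of_sigmaElem_nonneg {n k : ℕ} (hk : 2 ≤ k) (hkn : k ≤ n)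
    {x : Fin n → ℝ} (hnn : ∀ j ≤ k, 0 ≤ sigmaElem n j x) (i : Fin n) :
    ((k : ℝ) - n) / (n * (k - 1)) * ∑ j, x j ≤ x i := by
  set y := (Finset.univ.erase i).val.map x
  have hcons : Finset.univ.val.map x = x i ::ₘ y := by
    rw [← Finset.insert_erase (Finset.mem_univ i),
      Finset.insert_val_of_notMem (Finset.notMem_erase i _), Multiset.map_cons]
  have hcons_nn (j : ℕ) (hj : j ≤ k) : 0 ≤ (x i ::ₘ y).esymm j := by
    simpa only [sigmaElem_eq_esymm, hcons] using hnn j hj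
  have hy : (Multiset.card y : ℝ) = n - 1 := by
    rw [Multiset.card_map, Finset.card_val, Finset.card_erase_of_mem (Finset.mem_univ i),
      Finset.card_univ, Fintype.card_fin, Nat.cast_sub (by omega), Nat.cast_one]
  have hsum : ∑ j, x j = x i + y.sum := by
    rw [Finset.sum_eq_multiset_sum, hcons, Multiset.sum_cons]
  have hk' : (2 : ℝ) ≤ k := by exact_mod_cast hk
  have hkn' : (k : ℝ) ≤ n := by exact_mod_cast hkn
  have hden : (0 : ℝ) < n * (k - 1) := by nlinarith
  rw [div_mul_eq_mul_div, div_le_iff₀ hden, hsum]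
  rcases le_or_gt 0 (x i) with hxi | hxi
  · have hσ1 : 0 ≤ x i + y.sum := by
      simpa [Multiset.esymm_one] using hcons_nn 1 (by omega)
    nlinarith [mul_nonneg hxi hden.le]
  · have := Multiset.neg_mul_le_of_esymm_cons_nonneg hxi (by omega) hcons_nn
    rw [hy, Multiset.esymm_one] at this
    linarith

theorem min_ge_of_ALam_mem_general (n k : ℕ) (hk : 2 ≤ k) (hkn : k ≤ n)
    (Λ : Fin n → ℝ) (h : ALam n Λ ∈ closure (GammaPlus n k)) :
    ∀ i, (2 * (k : ℝ) - n) / (2 * n * ((k : ℝ) - 1)) * ∑ j, Λ j ≤ Λ i := by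
  intro i
  have hcoord := mul_sum_le_apply_of_sigmaElem_nonneg hk hkn
    (closure_GammaPlus_subset_setOf_sigmaElem_nonneg hkn h) i
  set S := ∑ j, Λ j
  have hsum : ∑ j, ALam n Λ j = S - n * (S / (2 * (n - 1))) := by
    simp [ALam, Finset.sum_sub_distrib, S]
  rw [hsum] at hcoord
  have hn : (2 : ℝ) ≤ n := by exact_mod_cast hk.trans hkn
  have hk' : (2 : ℝ) ≤ k := by exact_mod_cast hk
  have hsplit : (2 * (k : ℝ) - n) / (2 * n * (k - 1)) * S
      = ((k : ℝ) - n) / (n * (k - 1)) * (S - n * (S / (2 * (n - 1)))) + S / (2 * (n - 1)) := by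
    field_simp [show (n : ℝ) - 1 ≠ 0 by linarith, show (k : ℝ) - 1 ≠ 0 by linarith]
    ring
  rw [hsplit]
  linarith [show ALam n Λ i = Λ i - S / (2 * (n - 1)) from rfl]

/-- Lemma 1, first part: if `A_Λ ∈ Γ̄_k^+` with `2 ≤ k ≤ n`, `n ≥ 3`,
then `min_i λ_i ≥ ((2k−n)/(2n(k−1))) Σ_i λ_i`. -/
theorem min_ge_of_ALam_mem (n k : ℕ) (hn : 3 ≤ n) (hk : 2 ≤ k) (hkn : k ≤ n)
    (Λ : Fin n → ℝ) (h : ALam n Λ ∈ closure (GammaPlus n k)) :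
    ∀ i, (2 * (k : ℝ) - n) / (2 * n * ((k : ℝ) - 1)) * ∑ j, Λ j ≤ Λ i :=
  min_ge_of_ALam_mem_general n k hk hkn Λ h
end

section
/- (Newton–MacLaurin inequality on the closed Gårding cone) Let 1 ≤ k ≤ n and let Λ ∈ Γ̄_k^+ ⊆ ℝ^n. Then σ_k(Λ)/C(n,k) ≤ (σ_1(Λ)/n)^k, where C(n,k) is the binomial coefficient; equivalently, C(n,k)^{−1/k}·σ_k(Λ)^{1/k} ≤ σ_1(Λ)/n. -/
lemma sigmaElem_zero (n : ℕ) (x : Fin n → ℝ) : sigmaElem n 0 x = 1 := by simp [sigmaElem]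

open Polynomial Finset in
lemma sigmaElem_eq_coeff (n : ℕ) (x : Fin n → ℝ) {i : ℕ} (hi : i ≤ n) :
    (∏ j, (Polynomial.X + Polynomial.C (x j))).coeff (n - i) = sigmaElem n i x := by
  rw [Finset.prod_X_add_C_coeff _ _ (by simp [Nat.sub_le])]
  unfold sigmaElem
  congr 1
  simp [Nat.sub_sub_self hi]

lemma sigmaElem_one (n : ℕ) (x : Fin n → ℝ) : sigmaElem n 1 x = ∑ j, x j := by
  unfold sigmaElem
  rw [Finset.powersetCard_one, Finset.sum_map]
  simp

lemma sigmaElem_top (n : ℕ) (x : Fin n → ℝ) : sigmaElem n n x = ∏ j, x j := by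
  unfold sigmaElem
  have h := Finset.powersetCard_self (Finset.univ : Finset (Fin n))
  simp only [Finset.card_univ, Fintype.card_fin] at h
  rw [h]
  simp

lemma multiset_exists_fn {m : ℕ} (t : Multiset ℝ) (h : Multiset.card t = m) :
    ∃ y : Fin m → ℝ, Finset.univ.val.map y = t := by
  have hl : (t.toList : Multiset ℝ) = t := t.coe_toList
  have hlen : t.toList.length = m := by rw [← h, ← hl]; simp
  subst hlen
  exact ⟨t.toList.get, by rw [Fin.univ_val_map, List.ofFn_get, hl]⟩

lemma choose_identity (m i : ℕ) :
    (m + 1 - i) * (m + 1).choose i = (m + 1) * m.choose i := by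
  calc (m + 1 - i) * (m + 1).choose i = (m + 1).choose i * (m + 1 - i) := Nat.mul_comm _ _
    _ = (m + 1).choose (i + 1) * (i + 1) := (Nat.choose_succ_right_eq (m + 1) i).symm
    _ = (m + 1) * m.choose i := (Nat.add_one_mul_choose_eq m i).symm

lemma prod_add_expand (n : ℕ) (x : Fin n → ℝ) (r : ℝ) :
    ∏ j, (x j + r) = ∑ i ∈ Finset.range (n + 1), sigmaElem n i x * r ^ (n - i) := by
  rw [Finset.prod_add]
  rw [show ∀ f : Finset (Fin n) → ℝ, ∑ t ∈ Finset.univ.powerset, f t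
      = ∑ i ∈ Finset.range ((Finset.univ : Finset (Fin n)).card + 1),
          ∑ t ∈ Finset.univ.powersetCard i, f t from fun f => Finset.sum_powerset _ f]
  simp only [Finset.card_univ, Fintype.card_fin]
  unfold sigmaElem
  refine Finset.sum_congr rfl fun i hi => ?_
  rw [Finset.sum_mul]
  refine Finset.sum_congr rfl fun t ht => ?_
  rw [Finset.prod_const]
  congr 1
  have hc := (Finset.mem_powersetCard.mp ht).2
  rw [Finset.card_sdiff_of_subset (Finset.subset_univ t), hc, Finset.card_univ, Fintype.card_fin]

lemma all_pos_of (n : ℕ) (x : Fin n → ℝ)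
    (h1 : ∀ i, 1 ≤ i → i ≤ n → 0 ≤ sigmaElem n i x) (hn' : 0 < sigmaElem n n x) :
    ∀ j, 0 < x j := by
  intro j
  by_contra hj
  push_neg at hj
  have hprod : (0:ℝ) < ∏ j, x j := by rw [← sigmaElem_top]; exact hn'
  rcases lt_or_eq_of_le hj with hj' | hj'
  · -- x j < 0
    set r : ℝ := -x j with hr
    have hr0 : 0 < r := by simp [hr]; linarith
    have hzero : ∏ i, (x i + r) = 0 :=
      Finset.prod_eq_zero (Finset.mem_univ j) (by simp [hr])
    have hexp := prod_add_expand n x r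
    have hposs : (0:ℝ) < ∑ i ∈ Finset.range (n + 1), sigmaElem n i x * r ^ (n - i) := by
      apply Finset.sum_pos'
      · intro i hi
        rcases Nat.eq_zero_or_pos i with rfl | hi1
        · rw [sigmaElem_zero]; positivity
        · exact mul_nonneg (h1 i hi1 (by simp at hi; omega)) (by positivity)
      · exact ⟨n, by simp, by simpa using mul_pos hn' (by positivity : (0:ℝ) < r ^ (n - n))⟩
    rw [hexp] at hzero
    linarith
  · -- x j = 0
    rw [Finset.prod_eq_zero (Finset.mem_univ j) hj'] at hprod
    exact lt_irrefl _ hprod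

lemma amgm (n : ℕ) (hn : 1 ≤ n) (x : Fin n → ℝ) (hx : ∀ j, 0 < x j) :
    ∏ j, x j ≤ ((∑ j, x j) / n) ^ n := by
  have hn0 : (n:ℝ) ≠ 0 := by positivity
  have h := Real.geom_mean_le_arith_mean_weighted Finset.univ (fun _ => (n:ℝ)⁻¹) x
    (fun i _ => by positivity) (by simp [Finset.sum_const, Finset.card_univ]; field_simp)
    (fun i _ => (hx i).le)
  have hrhs : ∑ i, (n:ℝ)⁻¹ * x i = (∑ j, x j) / n := by
    rw [← Finset.mul_sum]; ring
  rw [hrhs] at h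
  have hG : (∏ j, x j) = (∏ j, x j ^ ((n:ℝ)⁻¹)) ^ (n : ℕ) := by
    rw [← Finset.prod_pow]
    apply Finset.prod_congr rfl
    intro j _
    rw [← Real.rpow_natCast (x j ^ ((n:ℝ)⁻¹)) n, ← Real.rpow_mul (hx j).le]
    rw [inv_mul_cancel₀ hn0, Real.rpow_one]
  rw [hG]
  exact pow_le_pow_left₀ (Finset.prod_nonneg fun j _ => Real.rpow_nonneg (hx j).le _) h n

open Polynomial in
lemma deriv_step (n : ℕ) (x : Fin (n + 1) → ℝ) :
    ∃ y : Fin n → ℝ, ∀ i, i ≤ n →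
      ((n : ℝ) + 1) * sigmaElem n i y = ((n + 1 - i : ℕ) : ℝ) * sigmaElem (n + 1) i x := by
  classical
  set P : ℝ[X] := ∏ j, (X + C (x j)) with hP
  have hPm : P.Monic := monic_prod_of_monic _ _ fun j _ => monic_X_add_C _
  have hdegP : P.natDegree = n + 1 := by
    rw [hP, natDegree_prod_of_monic _ _ fun j _ => monic_X_add_C _]
    simp [natDegree_X_add_C]
  have hrootsP : P.roots = (Finset.univ.val.map x).map Neg.neg := by
    have h2 : P = (((Finset.univ.val.map x).map Neg.neg).map fun a => X - C a).prod := by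
      rw [hP, Finset.prod_eq_multiset_prod]
      simp only [Multiset.map_map]
      refine congrArg Multiset.prod (Multiset.map_congr rfl fun r _ => ?_)
      simp [sub_neg_eq_add]
    rw [h2, roots_multiset_prod_X_sub_C]
  have hcardrootsP : Multiset.card P.roots = n + 1 := by
    rw [hrootsP]; simp
  set d : ℝ[X] := derivative P with hd
  have hdn : d.coeff n = (n : ℝ) + 1 := by
    rw [hd, coeff_derivative]
    have : P.coeff (n + 1) = 1 := by
      have := hPm.leadingCoeff
      rwa [leadingCoeff, hdegP] at this
    rw [this]; ring
  have hdegd : d.natDegree = n := by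
    refine le_antisymm ?_ (le_natDegree_of_ne_zero (by rw [hdn]; positivity))
    have h := natDegree_derivative_le P
    rw [← hd, hdegP] at h
    omega
  have hcardd : Multiset.card d.roots = n := by
    refine le_antisymm ((card_roots' d).trans_eq hdegd) ?_
    have h := P.card_roots_le_derivative
    rw [← hd, hcardrootsP] at h
    omega
  set c : ℝ := ((n : ℝ) + 1)⁻¹ with hc
  have hc0 : c ≠ 0 := by positivity
  set Q : ℝ[X] := C c * d with hQ
  have hrootsQ : Q.roots = d.roots := roots_C_mul _ hc0
  have hdegQ : Q.natDegree = n := by rw [hQ, natDegree_C_mul hc0, hdegd]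
  have hQm : Q.Monic := by
    rw [Monic, leadingCoeff, hdegQ, hQ, coeff_C_mul, hdn, hc]
    field_simp
  have hQprod : ((Q.roots.map Neg.neg).map fun a => X + C a).prod = Q := by
    conv_rhs => rw [← prod_multiset_X_sub_C_of_monic_of_roots_card_eq hQm
      (by rw [hrootsQ, hcardd, hdegQ])]
    simp only [Multiset.map_map]
    refine congrArg Multiset.prod (Multiset.map_congr rfl fun a _ => ?_)
    simp [sub_eq_add_neg]
  obtain ⟨y, hy⟩ := multiset_exists_fn (Q.roots.map Neg.neg) (by rw [Multiset.card_map, hrootsQ, hcardd])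
  refine ⟨y, fun i hi => ?_⟩
  have hyprod : (∏ j, (X + C (y j))) = Q := by
    rw [← hQprod, ← hy, Finset.prod_eq_multiset_prod, Multiset.map_map]
    rfl
  have hsy : sigmaElem n i y = Q.coeff (n - i) := by
    rw [← sigmaElem_eq_coeff n y hi, hyprod]
  have hsx : sigmaElem (n + 1) i x = P.coeff (n + 1 - i) := by
    rw [← sigmaElem_eq_coeff (n + 1) x (by omega), hP]
  have hQc : Q.coeff (n - i) = c * (P.coeff (n - i + 1) * ((n : ℝ) - i + 1)) := by
    rw [hQ, coeff_C_mul, hd, coeff_derivative]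
    push_cast [Nat.cast_sub hi]
    ring_nf
  have hidx : n - i + 1 = n + 1 - i := by omega
  rw [hsy, hsx, hQc, hidx, ← hidx, hidx]
  have hcast : ((n + 1 - i : ℕ) : ℝ) = (n : ℝ) - i + 1 := by
    push_cast [Nat.cast_sub (by omega : i ≤ n + 1)]; ring
  rw [hcast, hc]
  field_simp

lemma sigmaElem_continuous' (n i : ℕ) : Continuous fun x : Fin n → ℝ => sigmaElem n i x := by
  unfold sigmaElem
  exact continuous_finset_sum _ fun s _ => continuous_finset_prod _ fun j _ => continuous_apply j

lemma key_lemma : ∀ n k, 1 ≤ k → k ≤ n → ∀ x : Fin n → ℝ,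
    (∀ i, 1 ≤ i → i ≤ k → 0 ≤ sigmaElem n i x) → 0 < sigmaElem n k x →
    (∀ i, 1 ≤ i → i ≤ k → 0 < sigmaElem n i x) ∧
      sigmaElem n k x / (n.choose k : ℝ) ≤ (sigmaElem n 1 x / n) ^ k := by
  intro n
  induction n with
  | zero => intro k hk hkn; omega
  | succ m IH =>
    intro k hk hkn x hnn hpos
    rcases Nat.lt_or_ge k (m + 1) with hkm | hkm
    · -- k ≤ m : reduce via deriv_step
      have hkm' : k ≤ m := by omega
      obtain ⟨y, hy⟩ := deriv_step m x
      -- positive-scalar relation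
      have hrel : ∀ i, i ≤ m → ∃ c : ℝ, 0 < c ∧ sigmaElem m i y = c * sigmaElem (m + 1) i x := by
        intro i hi
        refine ⟨((m + 1 - i : ℕ) : ℝ) / ((m : ℝ) + 1), by
          have : (0:ℕ) < m + 1 - i := by omega
          positivity, ?_⟩
        have h := hy i hi
        have hm1 : ((m : ℝ) + 1) ≠ 0 := by positivity
        field_simp
        linear_combination h
      obtain ⟨hpos', hineq'⟩ := IH k hk hkm' y
        (fun i h1 h2 => by
          obtain ⟨c, hc, hcy⟩ := hrel i (by omega)
          rw [hcy]; exact mul_nonneg hc.le (hnn i h1 h2))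
        (by obtain ⟨c, hc, hcy⟩ := hrel k (by omega)
            rw [hcy]; exact mul_pos hc hpos)
      constructor
      · intro i h1 h2
        obtain ⟨c, hc, hcy⟩ := hrel i (by omega)
        have := hpos' i h1 h2
        rw [hcy] at this
        nlinarith
      · -- transfer the p-form inequality
        have hp : ∀ i, 1 ≤ i → i ≤ m →
            sigmaElem m i y / (m.choose i : ℝ) = sigmaElem (m + 1) i x / ((m + 1).choose i : ℝ) := by
          intro i h1 h2
          have h := hy i h2
          have hch := choose_identity m i
          have hc1 : (0:ℝ) < (m.choose i : ℝ) := by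
            exact_mod_cast Nat.cast_pos.mpr (Nat.choose_pos h2)
          have hc2 : (0:ℝ) < ((m + 1).choose i : ℝ) := by
            exact_mod_cast Nat.cast_pos.mpr (Nat.choose_pos (by omega : i ≤ m + 1))
          have hchR : ((m + 1 - i : ℕ) : ℝ) * ((m + 1).choose i : ℝ) = ((m : ℝ) + 1) * (m.choose i : ℝ) := by
            exact_mod_cast congrArg (Nat.cast : ℕ → ℝ) hch
          have hm1 : ((m:ℝ) + 1) ≠ 0 := by positivity
          rw [div_eq_div_iff hc1.ne' hc2.ne']
          apply mul_left_cancel₀ hm1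
          calc ((m:ℝ)+1) * (sigmaElem m i y * ((m + 1).choose i : ℝ))
              = (((m:ℝ)+1) * sigmaElem m i y) * ((m + 1).choose i : ℝ) := by ring
            _ = (((m+1-i:ℕ):ℝ) * sigmaElem (m+1) i x) * ((m + 1).choose i : ℝ) := by rw [h]
            _ = sigmaElem (m+1) i x * (((m+1-i:ℕ):ℝ) * ((m + 1).choose i : ℝ)) := by ring
            _ = sigmaElem (m+1) i x * (((m:ℝ)+1) * (m.choose i : ℝ)) := by rw [hchR]
            _ = ((m:ℝ)+1) * (sigmaElem (m+1) i x * (m.choose i : ℝ)) := by ring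
        have e1 := hp 1 le_rfl (by omega)
        have ek := hp k hk hkm'
        rw [← ek]
        simp only [Nat.choose_one_right] at e1
        push_cast at e1 ⊢
        rw [← e1]
        exact hineq'
    · -- k = m + 1 : all coordinates positive, use AM-GM
      have hk' : k = m + 1 := by omega
      subst hk'
      have hxpos := all_pos_of (m + 1) x hnn hpos
      constructor
      · intro i h1 h2
        unfold sigmaElem
        apply Finset.sum_pos
        · intro s hs
          exact Finset.prod_pos fun j _ => hxpos j
        · apply Finset.powersetCard_nonempty.mpr
          simpa using h2
      · rw [Nat.choose_self, Nat.cast_one, div_one, sigmaElem_top, sigmaElem_one]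
        exact_mod_cast amgm (m + 1) (by omega) x hxpos

lemma gamma_pos (n k : ℕ) (hk : 1 ≤ k) (hkn : k ≤ n) :
    ∀ x ∈ GammaPlus n k, ∀ i, 1 ≤ i → i ≤ k → 0 < sigmaElem n i x := by
  set U : Set (Fin n → ℝ) := {x | ∀ i, 1 ≤ i → i ≤ k → 0 < sigmaElem n i x} with hU
  set V : Set (Fin n → ℝ) := {x | ∃ i, 1 ≤ i ∧ i ≤ k ∧ sigmaElem n i x < 0} with hV
  have hUopen : IsOpen U := by
    have : U = ⋂ i ∈ Finset.Icc 1 k, {x | 0 < sigmaElem n i x} := by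
      ext x
      simp only [hU, Set.mem_setOf_eq, Set.mem_iInter, Finset.mem_Icc]
      exact ⟨fun h i hi => h i hi.1 hi.2, fun h i h1 h2 => h i ⟨h1, h2⟩⟩
    rw [this]
    exact isOpen_biInter_finset fun i _ => isOpen_lt continuous_const (sigmaElem_continuous' n i)
  have hVopen : IsOpen V := by
    have : V = ⋃ i ∈ Finset.Icc 1 k, {x | sigmaElem n i x < 0} := by
      ext x
      simp only [hV, Set.mem_setOf_eq, Set.mem_iUnion, Finset.mem_Icc, exists_prop]
      exact ⟨fun ⟨i, h1, h2, h3⟩ => ⟨i, ⟨h1, h2⟩, h3⟩, fun ⟨i, ⟨h1, h2⟩, h3⟩ => ⟨i, h1, h2, h3⟩⟩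
    rw [this]
    exact isOpen_biUnion fun i _ => isOpen_lt (sigmaElem_continuous' n i) continuous_const
  have hone : (fun _ => (1:ℝ)) ∈ {x : Fin n → ℝ | 0 < sigmaElem n k x} := by
    have : sigmaElem n k (fun _ => 1) = (n.choose k : ℝ) := by
      unfold sigmaElem
      simp [Finset.card_powersetCard]
    simp only [Set.mem_setOf_eq, this]
    exact_mod_cast Nat.choose_pos hkn
  have honeU : (fun _ => (1:ℝ)) ∈ U := by
    intro i h1 h2
    have : sigmaElem n i (fun _ => 1) = (n.choose i : ℝ) := by
      unfold sigmaElem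
      simp [Finset.card_powersetCard]
    rw [this]
    exact_mod_cast Nat.choose_pos (le_trans h2 hkn)
  have hpre : IsPreconnected (GammaPlus n k) := isPreconnected_connectedComponentIn
  have hcover : GammaPlus n k ⊆ U ∪ V := by
    intro x hx
    by_cases hxV : x ∈ V
    · exact Or.inr hxV
    · left
      have hxk : 0 < sigmaElem n k x := connectedComponentIn_subset {x : Fin n → ℝ | 0 < sigmaElem n k x} (fun _ => (1:ℝ)) hx
      have hnn : ∀ i, 1 ≤ i → i ≤ k → 0 ≤ sigmaElem n i x := by
        intro i h1 h2
        by_contra hneg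
        exact hxV ⟨i, h1, h2, by linarith⟩
      exact (key_lemma n k hk hkn x hnn hxk).1
  intro x hx
  by_contra hxU
  push_neg at hxU
  have hSV : (GammaPlus n k ∩ V).Nonempty := by
    refine ⟨x, hx, ?_⟩
    obtain ⟨i, h1, h2, h3⟩ := hxU
    have hxk : 0 < sigmaElem n k x := connectedComponentIn_subset {x : Fin n → ℝ | 0 < sigmaElem n k x} (fun _ => (1:ℝ)) hx
    by_cases hxV : x ∈ V
    · exact hxV
    · exfalso
      have hnn : ∀ i', 1 ≤ i' → i' ≤ k → 0 ≤ sigmaElem n i' x := by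
        intro i' h1' h2'
        by_contra hneg
        exact hxV ⟨i', h1', h2', by linarith⟩
      exact absurd ((key_lemma n k hk hkn x hnn hxk).1 i h1 h2) (not_lt.mpr h3)
  have hSU : (GammaPlus n k ∩ U).Nonempty :=
    ⟨fun _ => 1, mem_connectedComponentIn hone, honeU⟩
  obtain ⟨z, _, hzU, hzV⟩ := hpre U V hUopen hVopen hcover hSU hSV
  obtain ⟨i, h1, h2, h3⟩ := hzV
  exact absurd (hzU i h1 h2) (by linarith)

/-- Newton–MacLaurin inequality on `Γ̄_k^+`:
`σ_k(Λ)/C(n,k) ≤ (σ_1(Λ)/n)^k`. -/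
theorem newton_maclaurin (n k : ℕ) (hk : 1 ≤ k) (hkn : k ≤ n)
    (Λ : Fin n → ℝ) (h : Λ ∈ closure (GammaPlus n k)) :
    sigmaElem n k Λ / (n.choose k : ℝ) ≤ (sigmaElem n 1 Λ / n) ^ k := by
  have hsub : GammaPlus n k ⊆
      {x | sigmaElem n k x / (n.choose k : ℝ) ≤ (sigmaElem n 1 x / n) ^ k} := by
    intro x hx
    have hpos := gamma_pos n k hk hkn x hx
    exact (key_lemma n k hk hkn x (fun i h1 h2 => (hpos i h1 h2).le) (hpos k hk le_rfl)).2
  have hclosed : IsClosed {x : Fin n → ℝ |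
      sigmaElem n k x / (n.choose k : ℝ) ≤ (sigmaElem n 1 x / n) ^ k} :=
    isClosed_le ((sigmaElem_continuous' n k).div_const _)
      (((sigmaElem_continuous' n 1).div_const _).pow k)
  exact closure_minimal hsub hclosed h
end
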